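/- Let Q be a C¹ function near w ∈ ℝ^d with values in the N×N complex matrices and let ν ∈ ℝ^d. If Q is quasi-symmetric at w with respect to ν, then −Q* (pointwise conjugate transpose) is quasi-symmetric at w with respect to −ν. Moreover, if E is C¹ near w with E(w) invertible, then the pointwise product E*QE is quasi-symmetric at w with respect to ν. -/

import Mathlib

open Matrix

/-- The directional derivative `∂_ν Q(w)` of a matrix-valued function, taken entrywise. -/
noncomputable def dirDeriv {d N : ℕ} (Q : EuclideanSpace ℝ (Fin d) → Matrix (Fin N) (Fin N) ℂ)
    (w ν : EuclideanSpace ℝ (Fin d)) : Matrix (Fin N) (Fin N) ℂ :=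
  fun i j => deriv (fun t : ℝ => Q (w + t • ν) i j) 0

/-- `Q` is quasi-symmetric at `w` with respect to the direction `ν` if `Im⟨Q(w)u, u⟩ ≥ 0` for
all `u ∈ ℂ^N` and there are constants `c > 0`, `C ≥ 0` with
`Re⟨∂_ν Q(w)u, u⟩ ≥ c‖u‖² − C‖Q(w)u‖²` for all `u ∈ ℂ^N`.
Here `⟨a, b⟩ = ⟪b, a⟫_ℂ` is linear in the first argument. -/
noncomputable def IsQuasiSymmetricAt {d N : ℕ}
    (Q : EuclideanSpace ℝ (Fin d) → Matrix (Fin N) (Fin N) ℂ)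
    (w ν : EuclideanSpace ℝ (Fin d)) : Prop :=
  (∀ u : EuclideanSpace ℂ (Fin N),
      0 ≤ (inner ℂ u (Matrix.toEuclideanLin (Q w) u) : ℂ).im) ∧
  ∃ c : ℝ, 0 < c ∧ ∃ C : ℝ, 0 ≤ C ∧
    ∀ u : EuclideanSpace ℂ (Fin N),
      c * ‖u‖ ^ 2 - C * ‖Matrix.toEuclideanLin (Q w) u‖ ^ 2 ≤
        (inner ℂ u (Matrix.toEuclideanLin (dirDeriv Q w ν) u) : ℂ).re

/-!
Write `T = Q(w)` and `D = ∂_ν Q(w)`. The condition `Im⟨Tu, u⟩ ≥ 0` says that `i(T* − T)` is a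
positive operator, and Cauchy–Schwarz for it gives `‖(T − T*)u‖² ≤ 2‖T − T*‖ Im⟨Tu, u⟩`, where
`Im⟨Tu, u⟩` is at most both `‖u‖ ‖Tu‖` and `‖u‖ ‖T*u‖`. So `‖Tu‖²` and `‖T*u‖²` bound each other
up to a term `‖u‖ ‖·‖`, which Young's inequality absorbs into `c‖u‖²`. This settles `−Q*`, whose
derivative along `−ν` is `(∂_ν Q)*`. For `E*QE`, with `S = E(w)` and `T' = S*TS`, the product
rule writes the derivative as `S*DS + G*T' + T'G` with `G = S⁻¹ ∂_ν E`: congruence by the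
invertible `S` preserves quasi-symmetry, and the perturbation `G*T' + T'G` is bounded below by
`−‖G‖ ‖u‖ (‖T'u‖ + ‖T'*u‖)`, which is absorbed in the same way.
-/

open scoped InnerProductSpace

lemma mul_mul_le_div_four_mul_sq_add_div_mul_sq {ε : ℝ} (hε : 0 < ε) (m x y : ℝ) :
    m * x * y ≤ ε / 4 * x ^ 2 + m ^ 2 / ε * y ^ 2 := by
  have key : m ^ 2 / ε * ε = m ^ 2 := div_mul_cancel₀ _ hε.ne'
  nlinarith [sq_nonneg (ε * x - 2 * m * y)]

open RCLike in
lemma ContinuousLinearMap.IsPositive.norm_apply_sq_le {𝕜 E : Type*} [RCLike 𝕜]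
    [NormedAddCommGroup E] [InnerProductSpace 𝕜 E] {P : E →L[𝕜] E} (hP : P.IsPositive) (x : E) :
    ‖P x‖ ^ 2 ≤ ‖P‖ * re ⟪P x, x⟫_𝕜 := by
  set p := re ⟪P x, x⟫_𝕜
  set q := ‖P x‖ ^ 2
  set r := re ⟪P (P x), P x⟫_𝕜
  have quadratic : ∀ t : ℝ, 0 ≤ r * (t * t) + 2 * q * t + p := by
    intro t
    have h := hP.re_inner_nonneg_left (x + (t : 𝕜) • P x)
    have hsymm : ⟪P (P x), x⟫_𝕜 = ⟪P x, P x⟫_𝕜 := hP.isSymmetric _ _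
    simp only [map_add, map_smul, inner_add_left, inner_add_right, inner_smul_left,
      inner_smul_right, hsymm, inner_self_eq_norm_sq_to_K, conj_ofReal] at h
    simp only [mul_add, map_add, ← ofReal_pow, ← ofReal_mul, re_ofReal_mul, ofReal_re] at h
    linarith
  have hr : r ≤ ‖P‖ * q := calc
    r ≤ ‖P (P x)‖ * ‖P x‖ := re_inner_le_norm _ _
    _ ≤ ‖P‖ * ‖P x‖ * ‖P x‖ := by gcongr; exact P.le_opNorm _
    _ = ‖P‖ * q := by ring
  have hdisc : (2 * q) ^ 2 ≤ 4 * r * p := by simpa [discrim] using discrim_le_zero quadratic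
  have hp : 0 ≤ p := hP.re_inner_nonneg_left x
  rcases (sq_nonneg ‖P x‖).lt_or_eq with hq | hq
  · nlinarith
  · simp [q, ← hq]; positivity

open Complex ComplexConjugate

section HilbertSpace

variable {H : Type*} [NormedAddCommGroup H] [InnerProductSpace ℂ H] [CompleteSpace H]

namespace ContinuousLinearMap

lemma inner_adjoint_apply_self (T : H →L[ℂ] H) (u : H) : ⟪u, adjoint T u⟫_ℂ = conj ⟪u, T u⟫_ℂ := by
  rw [adjoint_inner_right, inner_conj_symm]

lemma re_inner_I_smul_adjoint_sub_apply (T : H →L[ℂ] H) (u : H) :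
    (⟪(I • (adjoint T - T)) u, u⟫_ℂ).re = 2 * (⟪u, T u⟫_ℂ).im := by
  rw [_root_.smul_apply, _root_.sub_apply, inner_smul_left, inner_sub_left, adjoint_inner_left,
    ← inner_conj_symm (T u) u, sub_conj]
  simp only [conj_I, mul_re, neg_re, I_re, neg_im, I_im, ofReal_re, ofReal_im, mul_im]
  ring

lemma isPositive_I_smul_adjoint_sub {T : H →L[ℂ] H} (hT : ∀ u, 0 ≤ (⟪u, T u⟫_ℂ).im) :
    (I • (adjoint T - T)).IsPositive := by
  refine isPositive_def'.2 ⟨?_, fun u => ?_⟩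
  · rw [IsSelfAdjoint, star_smul, star_sub, ← star_eq_adjoint, star_star, Complex.star_def,
      conj_I, neg_smul, ← smul_neg, neg_sub]
  · rw [reApplyInnerSelf_apply, RCLike.re_to_complex, re_inner_I_smul_adjoint_sub_apply]
    linarith [hT u]

lemma norm_sub_adjoint_apply_sq_le {T : H →L[ℂ] H} (hT : ∀ u, 0 ≤ (⟪u, T u⟫_ℂ).im) (u : H) :
    ‖(T - adjoint T) u‖ ^ 2 ≤ 2 * ‖T - adjoint T‖ * (⟪u, T u⟫_ℂ).im := by
  have h := (isPositive_I_smul_adjoint_sub hT).norm_apply_sq_le u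
  rw [RCLike.re_to_complex, re_inner_I_smul_adjoint_sub_apply, _root_.smul_apply, norm_smul,
    norm_smul, norm_I, one_mul, one_mul, ← norm_neg, ← _root_.neg_apply, neg_sub,
    norm_sub_rev] at h
  linarith

lemma norm_apply_sq_le_of_im_inner_nonneg {T : H →L[ℂ] H} (hT : ∀ u, 0 ≤ (⟪u, T u⟫_ℂ).im)
    (u : H) : ‖T u‖ ^ 2 ≤ 2 * ‖adjoint T u‖ ^ 2 + 4 * ‖T - adjoint T‖ * ‖u‖ * ‖adjoint T u‖ := by
  have hsplit : ‖T u‖ ≤ ‖adjoint T u‖ + ‖(T - adjoint T) u‖ := by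
    simpa using norm_add_le (adjoint T u) ((T - adjoint T) u)
  have him : (⟪u, T u⟫_ℂ).im ≤ ‖u‖ * ‖adjoint T u‖ := calc
    (⟪u, T u⟫_ℂ).im ≤ ‖⟪adjoint T u, u⟫_ℂ‖ := by
      rw [adjoint_inner_left]; exact (le_abs_self _).trans (abs_im_le_norm _)
    _ ≤ ‖u‖ * ‖adjoint T u‖ := by rw [mul_comm]; exact norm_inner_le_norm _ _
  have hskew := norm_sub_adjoint_apply_sq_le hT u
  nlinarith [norm_nonneg (T u), norm_nonneg ((T - adjoint T) u), norm_nonneg (T - adjoint T),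
    sq_nonneg (‖adjoint T u‖ - ‖(T - adjoint T) u‖)]

lemma norm_adjoint_apply_sq_le_of_im_inner_nonneg {T : H →L[ℂ] H}
    (hT : ∀ u, 0 ≤ (⟪u, T u⟫_ℂ).im) (u : H) :
    ‖adjoint T u‖ ^ 2 ≤ 2 * ‖T u‖ ^ 2 + 4 * ‖T - adjoint T‖ * ‖u‖ * ‖T u‖ := by
  have hT' : ∀ u, 0 ≤ (⟪u, (-adjoint T) u⟫_ℂ).im := fun u => by
    rw [_root_.neg_apply, inner_neg_right, inner_adjoint_apply_self, neg_im, conj_im, neg_neg]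
    exact hT u
  have h := norm_apply_sq_le_of_im_inner_nonneg hT' u
  rwa [map_neg, adjoint_adjoint, _root_.neg_apply, _root_.neg_apply, norm_neg, norm_neg,
    sub_neg_eq_add, neg_add_eq_sub] at h

end ContinuousLinearMap

def IsQuasiSymmetricPair (T D : H →L[ℂ] H) : Prop :=
  (∀ u, 0 ≤ (⟪u, T u⟫_ℂ).im) ∧
  ∃ c : ℝ, 0 < c ∧ ∃ C : ℝ, 0 ≤ C ∧ ∀ u, c * ‖u‖ ^ 2 - C * ‖T u‖ ^ 2 ≤ (⟪u, D u⟫_ℂ).re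

namespace IsQuasiSymmetricPair

open ContinuousLinearMap

variable {T D : H →L[ℂ] H}

lemma neg_adjoint (h : IsQuasiSymmetricPair T D) :
    IsQuasiSymmetricPair (-adjoint T) (adjoint D) := by
  obtain ⟨him, c, hc, C, hC, hre⟩ := h
  refine ⟨fun u => ?_, c / 2, by positivity,
    2 * C + (4 * C * ‖T - adjoint T‖) ^ 2 / (2 * c), by positivity, fun u => ?_⟩
  · rw [_root_.neg_apply, inner_neg_right, inner_adjoint_apply_self, neg_im, conj_im, neg_neg]
    exact him u
  · rw [inner_adjoint_apply_self, Complex.conj_re, _root_.neg_apply, norm_neg]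
    have hT := norm_apply_sq_le_of_im_inner_nonneg him u
    have hyoung := mul_mul_le_div_four_mul_sq_add_div_mul_sq (by positivity : 0 < 2 * c)
      (4 * C * ‖T - adjoint T‖) ‖u‖ ‖adjoint T u‖
    linarith [hre u, mul_le_mul_of_nonneg_left hT hC]

lemma adjoint_mul_mul {S : H →L[ℂ] H} (hS : IsUnit S) (h : IsQuasiSymmetricPair T D) :
    IsQuasiSymmetricPair (adjoint S * T * S) (adjoint S * D * S) := by
  obtain ⟨him, c, hc, C, hC, hre⟩ := h
  set a := ‖(↑hS.unit⁻¹ : H →L[ℂ] H)‖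
  set b := ‖(↑hS.star.unit⁻¹ : H →L[ℂ] H)‖
  refine ⟨fun u => ?_, c / (a ^ 2 + 1), by positivity, C * b ^ 2, by positivity, fun u => ?_⟩
  · rw [mul_apply_eq_comp, mul_apply_eq_comp, adjoint_inner_right]
    exact him (S u)
  · simp only [mul_apply_eq_comp, adjoint_inner_right]
    have hu : ‖u‖ ≤ a * ‖S u‖ := by
      simpa [← mul_apply_eq_comp] using (↑hS.unit⁻¹ : H →L[ℂ] H).le_opNorm (S u)
    have hTS : ‖T (S u)‖ ≤ b * ‖adjoint S (T (S u))‖ := by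
      have := (↑hS.star.unit⁻¹ : H →L[ℂ] H).le_opNorm (star S (T (S u)))
      rw [← star_eq_adjoint]
      rwa [← mul_apply_eq_comp, hS.star.val_inv_mul, one_apply_eq_self] at this
    have hcoercive : c / (a ^ 2 + 1) * ‖u‖ ^ 2 ≤ c * ‖S u‖ ^ 2 := by
      rw [div_mul_eq_mul_div, div_le_iff₀ (by positivity)]
      have : ‖u‖ ^ 2 ≤ a ^ 2 * ‖S u‖ ^ 2 := by rw [← mul_pow]; gcongr
      nlinarith [sq_nonneg ‖S u‖]
    have hbound : C * ‖T (S u)‖ ^ 2 ≤ C * b ^ 2 * ‖adjoint S (T (S u))‖ ^ 2 := by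
      rw [mul_assoc, ← mul_pow]; gcongr
    linarith [hre (S u)]

lemma add_adjoint_mul_add_mul (G : H →L[ℂ] H) (h : IsQuasiSymmetricPair T D) :
    IsQuasiSymmetricPair T (D + adjoint G * T + T * G) := by
  obtain ⟨him, c, hc, C, hC, hre⟩ := h
  set g := ‖G‖
  set K := g ^ 2 / (c / 2) with hK
  refine ⟨him, c / 2, by positivity,
    C + g ^ 2 / c + 2 * K + (K * (4 * ‖T - adjoint T‖)) ^ 2 / (c / 2), by positivity, fun u => ?_⟩
  simp only [_root_.add_apply, mul_apply_eq_comp, inner_add_right, Complex.add_re]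
  rw [adjoint_inner_right, ← adjoint_inner_left T (G u) u]
  have hGu : ‖G u‖ ≤ g * ‖u‖ := G.le_opNorm u
  have hcross₁ : -(g * ‖u‖ * ‖T u‖) ≤ (⟪G u, T u⟫_ℂ).re := by
    refine neg_le_of_neg_le ((neg_le_abs _).trans ((abs_re_le_norm _).trans ?_))
    refine (norm_inner_le_norm _ _).trans ?_
    gcongr
  have hcross₂ : -(g * ‖u‖ * ‖adjoint T u‖) ≤ (⟪adjoint T u, G u⟫_ℂ).re := by
    refine neg_le_of_neg_le ((neg_le_abs _).trans ((abs_re_le_norm _).trans ?_))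
    refine (norm_inner_le_norm _ _).trans ?_
    rw [mul_comm]
    gcongr
  have hadj := norm_adjoint_apply_sq_le_of_im_inner_nonneg him u
  have h₁ := mul_mul_le_div_four_mul_sq_add_div_mul_sq hc g ‖u‖ ‖T u‖
  have h₂ := mul_mul_le_div_four_mul_sq_add_div_mul_sq (half_pos hc) g ‖u‖ ‖adjoint T u‖
  rw [← hK] at h₂
  have h₃ := mul_mul_le_div_four_mul_sq_add_div_mul_sq (half_pos hc)
    (K * (4 * ‖T - adjoint T‖)) ‖u‖ ‖T u‖
  have h₄ := mul_le_mul_of_nonneg_left hadj (by positivity : 0 ≤ K)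
  linarith [hre u]

end IsQuasiSymmetricPair

end HilbertSpace

/-- The product rule for `E*QE` at `w`, rearranged as a congruence by `u = E(w)` plus the
perturbation by `G = u⁻¹ F`. -/
lemma Units.star_mul_mul_add_add_eq {R : Type*} [Ring R] [StarRing R] (u : Rˣ) (T D F : R) :
    star F * T * u + star (u : R) * D * u + star (u : R) * T * F =
      star (u : R) * D * u + star (↑u⁻¹ * F) * (star (u : R) * T * u) +
        star (u : R) * T * u * (↑u⁻¹ * F) := by
  have h : ∀ X : R, star (↑u⁻¹ : R) * (star (u : R) * X) = X := fun X => by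
    rw [← mul_assoc, ← star_mul, u.mul_inv, star_one, one_mul]
  simp only [star_mul, mul_assoc, h, u.mul_inv_cancel_left]
  abel

namespace Matrix

variable {l m n : Type*}

lemma hasDerivAt_mul_apply [Fintype m] {A : ℝ → Matrix l m ℂ} {B : ℝ → Matrix m n ℂ}
    {A' : Matrix l m ℂ} {B' : Matrix m n ℂ} {t : ℝ} (hA : ∀ i j, HasDerivAt (fun s => A s i j) (A' i j) t)
    (hB : ∀ i j, HasDerivAt (fun s => B s i j) (B' i j) t) (i : l) (j : n) :
    HasDerivAt (fun s => (A s * B s) i j) ((A' * B t + A t * B') i j) t := by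
  simp only [mul_apply, add_apply, ← Finset.sum_add_distrib]
  exact HasDerivAt.fun_sum fun k _ => (hA i k).mul (hB k j)

lemma hasDerivAt_conjTranspose_apply {A : ℝ → Matrix m n ℂ} {A' : Matrix m n ℂ} {t : ℝ}
    (hA : ∀ i j, HasDerivAt (fun s => A s i j) (A' i j) t) (i : n) (j : m) :
    HasDerivAt (fun s => (A s)ᴴ i j) (A'ᴴ i j) t :=
  (hA j i).star

end Matrix

section DirDeriv

variable {d N : ℕ}

lemma hasDerivAt_dirDeriv {Q : EuclideanSpace ℝ (Fin d) → Matrix (Fin N) (Fin N) ℂ}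
    {w : EuclideanSpace ℝ (Fin d)} (hQ : ∀ i j, DifferentiableAt ℝ (fun x => Q x i j) w)
    (ν : EuclideanSpace ℝ (Fin d)) (i j : Fin N) :
    HasDerivAt (fun t : ℝ => Q (w + t • ν) i j) (dirDeriv Q w ν i j) 0 := by
  have hline : DifferentiableAt ℝ (fun t : ℝ => w + t • ν) 0 := by fun_prop
  have hQ' : DifferentiableAt ℝ (fun x => Q x i j) (w + (0 : ℝ) • ν) := by simpa using hQ i j
  exact (hQ'.comp 0 hline).hasDerivAt

lemma dirDeriv_neg_conjTranspose (Q : EuclideanSpace ℝ (Fin d) → Matrix (Fin N) (Fin N) ℂ)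
    (w ν : EuclideanSpace ℝ (Fin d)) :
    dirDeriv (fun x => -(Q x)ᴴ) w (-ν) = (dirDeriv Q w ν)ᴴ := by
  ext i j
  simp only [dirDeriv, Matrix.neg_apply, conjTranspose_apply, smul_neg, ← neg_smul]
  rw [deriv.fun_neg, deriv.star, deriv_comp_neg (f := fun t : ℝ => Q (w + t • ν) j i), neg_zero,
    star_neg, neg_neg]

lemma dirDeriv_conjTranspose_mul_mul {Q E : EuclideanSpace ℝ (Fin d) → Matrix (Fin N) (Fin N) ℂ}
    {w : EuclideanSpace ℝ (Fin d)} (hQ : ∀ i j, DifferentiableAt ℝ (fun x => Q x i j) w)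
    (hE : ∀ i j, DifferentiableAt ℝ (fun x => E x i j) w) (ν : EuclideanSpace ℝ (Fin d)) :
    dirDeriv (fun x => (E x)ᴴ * Q x * E x) w ν =
      (dirDeriv E w ν)ᴴ * Q w * E w + (E w)ᴴ * dirDeriv Q w ν * E w +
        (E w)ᴴ * Q w * dirDeriv E w ν := by
  ext i j
  have hE' := hasDerivAt_dirDeriv hE ν
  have h := hasDerivAt_mul_apply
    (hasDerivAt_mul_apply (hasDerivAt_conjTranspose_apply hE') (hasDerivAt_dirDeriv hQ ν)) hE' i j
  simp only [zero_smul, add_zero, add_mul] at h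
  exact h.deriv

lemma isQuasiSymmetricAt_iff {Q : EuclideanSpace ℝ (Fin d) → Matrix (Fin N) (Fin N) ℂ}
    {w ν : EuclideanSpace ℝ (Fin d)} :
    IsQuasiSymmetricAt Q w ν ↔
      IsQuasiSymmetricPair (toEuclideanCLM (𝕜 := ℂ) (Q w))
        (toEuclideanCLM (𝕜 := ℂ) (dirDeriv Q w ν)) :=
  Iff.rfl

end DirDeriv

/-- **Proposition 4.11.** If `Q` is quasi-symmetric at `w` with respect to `ν`, then `−Q*` is
quasi-symmetric at `w` with respect to `−ν`; and if `E` is `C¹` near `w` with `E(w)`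
invertible, then `E* Q E` is quasi-symmetric at `w` with respect to `ν`. -/
theorem quasiSymmetric_invariance {d N : ℕ}
    (Q E : EuclideanSpace ℝ (Fin d) → Matrix (Fin N) (Fin N) ℂ)
    (w ν : EuclideanSpace ℝ (Fin d))
    (hQ : ∀ i j, ContDiffAt ℝ 1 (fun x => Q x i j) w)
    (hE : ∀ i j, ContDiffAt ℝ 1 (fun x => E x i j) w)
    (hEinv : IsUnit (E w))
    (hquasi : IsQuasiSymmetricAt Q w ν) :
    IsQuasiSymmetricAt (fun x => -(Q x)ᴴ) w (-ν) ∧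
    IsQuasiSymmetricAt (fun x => (E x)ᴴ * Q x * E x) w ν := by
  rw [isQuasiSymmetricAt_iff] at hquasi
  refine ⟨?_, ?_⟩
  · rw [isQuasiSymmetricAt_iff, dirDeriv_neg_conjTranspose, map_neg, ← star_eq_conjTranspose,
      ← star_eq_conjTranspose, map_star, map_star, ContinuousLinearMap.star_eq_adjoint,
      ContinuousLinearMap.star_eq_adjoint]
    exact hquasi.neg_adjoint
  · obtain ⟨S, hS⟩ := hEinv.map (toEuclideanCLM (𝕜 := ℂ))
    have h := (hquasi.adjoint_mul_mul S.isUnit).add_adjoint_mul_add_mul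
      (S⁻¹.val * toEuclideanCLM (𝕜 := ℂ) (dirDeriv E w ν))
    rw [isQuasiSymmetricAt_iff, dirDeriv_conjTranspose_mul_mul
      (fun i j => (hQ i j).differentiableAt one_ne_zero)
      (fun i j => (hE i j).differentiableAt one_ne_zero)]
    simp only [map_add, map_mul, ← star_eq_conjTranspose, map_star]
    rw [← hS, Units.star_mul_mul_add_add_eq S]
    simpa only [ContinuousLinearMap.star_eq_adjoint] using h
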